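/- arXiv:2405.13430 — 2 statements merged into one kernel-verified Lean document; each statement's English description precedes it below -/
import Mathlib

section
/- Assume the symmetric unisolvent setup: B = {f_1,…,f_N} is a linearly independent symmetric set of functions, F = span(B), P = {a_1,…,a_N} is a symmetric set of N points, and the interpolation problem is unisolvent. Then for every subgroup H of S_n, the number of H-orbits of the set B (under the restricted action σ • f = f ∘ (σ⁻¹ •)) equals the number of H-orbits of the set P (under the restricted coordinate-permutation action). -/
/-- The action of `S_n` on `ℝ^n` by permuting coordinates: `σ • x = x ∘ σ⁻¹`. -/
def psmul {n : ℕ} (σ : Equiv.Perm (Fin n)) (x : Fin n → ℝ) : Fin n → ℝ := x ∘ ⇑σ⁻¹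

/-- The action of `S_n` on functions `ℝ^n → ℝ`: `(σ • f)(x) = f(σ⁻¹ • x)`. -/
def fsmul {n : ℕ} (σ : Equiv.Perm (Fin n)) (f : (Fin n → ℝ) → ℝ) : (Fin n → ℝ) → ℝ :=
  fun x => f (psmul σ⁻¹ x)

/-- The orbit of a point `x ∈ ℝ^n` under a subgroup `H ≤ S_n`. -/
def porbitUnder {n : ℕ} (H : Subgroup (Equiv.Perm (Fin n))) (x : Fin n → ℝ) :
    Set (Fin n → ℝ) := {y | ∃ σ ∈ H, psmul σ x = y}

/-- The orbit of a function `g : ℝ^n → ℝ` under a subgroup `H ≤ S_n`. -/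
def forbitUnder {n : ℕ} (H : Subgroup (Equiv.Perm (Fin n))) (g : (Fin n → ℝ) → ℝ) :
    Set ((Fin n → ℝ) → ℝ) := {h | ∃ σ ∈ H, fsmul σ g = h}

/-- The Lagrange interpolation problem with interpolation space `F` and nodes
`a 1, …, a N` is unisolvent. -/
def Unisolvent {n N : ℕ} (F : Submodule ℝ ((Fin n → ℝ) → ℝ))
    (a : Fin N → (Fin n → ℝ)) : Prop :=
  ∀ b : Fin N → ℝ, ∃! f : F, ∀ i, (f : (Fin n → ℝ) → ℝ) (a i) = b i

/-!
Each `σ ∈ H` acts linearly on `F`, and this linear map permutes two bases of `F`: the basis `B`,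
and the Lagrange basis `(ℓ_p)_{p ∈ P}` dual to evaluation at the nodes, with `σ • ℓ_p = ℓ_{σ • p}`.
Computing its trace in either basis, `σ` fixes as many elements of `B` as of `P`. By Burnside's
lemma the two actions of `H` then have the same number of orbits.
-/

open MulAction Module

-- With this instance `σ • x` is `psmul σ x` and `σ • g` is `fsmul σ g`, definitionally.
attribute [local instance] arrowAction

section Burnside

variable {G α β : Type*} [Group G] [Finite G] [MulAction G α] [MulAction G β] [Finite α]
  [Finite β]

theorem card_orbits_eq_of_card_fixedBy_eq
    (h : ∀ g : G, Nat.card (fixedBy α g) = Nat.card (fixedBy β g)) :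
    Nat.card (orbitRel.Quotient G α) = Nat.card (orbitRel.Quotient G β) := by
  classical
  have := Fintype.ofFinite G
  have := Fintype.ofFinite α
  have := Fintype.ofFinite β
  have := Fintype.ofFinite (orbitRel.Quotient G α)
  have := Fintype.ofFinite (orbitRel.Quotient G β)
  have hα := sum_card_fixedBy_eq_card_orbits_mul_card_group G α
  have hβ := sum_card_fixedBy_eq_card_orbits_mul_card_group G β
  simp only [Fintype.card_eq_nat_card, h] at hα hβ
  exact Nat.eq_of_mul_eq_mul_right Nat.card_pos (hα.symm.trans hβ)

end Burnside

section Trace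

variable {G K M ι κ : Type*} [Group G] [Field K] [AddCommGroup M] [Module K M]
  [Finite ι] [MulAction G ι] [Finite κ] [MulAction G κ]

theorem trace_eq_card_fixedBy (b : Basis ι K M) (T : M →ₗ[K] M) (g : G)
    (hT : ∀ i, T (b i) = b (g • i)) : LinearMap.trace K M T = Nat.card (fixedBy ι g) := by
  classical
  have := Fintype.ofFinite ι
  have hdiag : ∀ i, LinearMap.toMatrix b b T i i = if g • i = i then 1 else 0 := by
    intro i
    simp [LinearMap.toMatrix_apply, hT, Finsupp.single_apply]
  rw [LinearMap.trace_eq_matrix_trace K b, Matrix.trace]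
  simp only [Matrix.diag, hdiag, Finset.sum_boole, Nat.card_eq_fintype_card, Fintype.card_subtype]
  rfl

theorem card_orbits_eq_of_permuted_bases [Finite G] [CharZero K] (ρ : G → M →ₗ[K] M)
    (b : Basis ι K M) (c : Basis κ K M) (hb : ∀ g i, ρ g (b i) = b (g • i))
    (hc : ∀ g k, ρ g (c k) = c (g • k)) :
    Nat.card (orbitRel.Quotient G ι) = Nat.card (orbitRel.Quotient G κ) :=
  card_orbits_eq_of_card_fixedBy_eq fun g => by
    exact_mod_cast (trace_eq_card_fixedBy b (ρ g) g (hb g)).symm.trans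
      (trace_eq_card_fixedBy c (ρ g) g (hc g))

end Trace

theorem SubMulAction.ncard_orbits {G α : Type*} [Group G] [MulAction G α]
    (s : SubMulAction G α) :
    {O : Set α | ∃ x ∈ s, O = orbit G x}.ncard = Nat.card (orbitRel.Quotient G s) := by
  have hrange : {O : Set α | ∃ x ∈ s, O = orbit G x}
      = Set.image Subtype.val '' Set.range (orbitRel.Quotient.orbit (G := G) (α := s)) := by
    ext O
    constructor
    · rintro ⟨x, hx, rfl⟩
      exact ⟨_, ⟨Quotient.mk'' ⟨x, hx⟩, rfl⟩, SubMulAction.val_image_orbit _⟩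
    · rintro ⟨_, ⟨ω, rfl⟩, rfl⟩
      induction ω using Quotient.inductionOn' with
      | h x => exact ⟨x, x.2, SubMulAction.val_image_orbit x⟩
  rw [hrange, Set.ncard_image_of_injective _ Subtype.val_injective.image_injective,
    ← Set.image_univ, Set.ncard_image_of_injective _ orbitRel.Quotient.orbit_injective,
    Set.ncard_univ]

section Interpolation

variable {G X K : Type*} [Group G] [MulAction G X] [Field K] {F : Submodule K (X → K)}

theorem smul_mem_span_of_smul_mem {s : Set (X → K)} (hs : ∀ g : G, ∀ φ ∈ s, g • φ ∈ s) (g : G)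
    {φ : X → K} (hφ : φ ∈ Submodule.span K s) : g • φ ∈ Submodule.span K s := by
  induction hφ using Submodule.span_induction with
  | mem ψ hψ => exact Submodule.subset_span (hs g ψ hψ)
  | zero => exact zero_mem _
  | add ψ χ _ _ hψ hχ => exact add_mem hψ hχ
  | smul c ψ _ hψ => exact Submodule.smul_mem _ c hψ

def Submodule.smulEnd (hF : ∀ g : G, ∀ φ ∈ F, g • φ ∈ F) (g : G) : F →ₗ[K] F where
  toFun φ := ⟨g • (φ : X → K), hF g φ φ.2⟩
  map_add' _ _ := rfl
  map_smul' _ _ := rfl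

variable (F) in
def Submodule.evalOn (P : Set X) : F →ₗ[K] (P → K) where
  toFun φ p := (φ : X → K) p
  map_add' _ _ := rfl
  map_smul' _ _ := rfl

variable {P : SubMulAction G X} [Finite P]

noncomputable def lagrangeBasis (h : Function.Bijective (F.evalOn (P : Set X))) : Basis P K F :=
  (Pi.basisFun K P).map (LinearEquiv.ofBijective _ h).symm

open scoped Classical in
theorem evalOn_lagrangeBasis (h : Function.Bijective (F.evalOn (P : Set X))) (p : P) :
    F.evalOn (P : Set X) (lagrangeBasis h p) = Pi.single p 1 := by
  rw [lagrangeBasis, Basis.map_apply, Pi.basisFun_apply]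
  exact LinearEquiv.apply_symm_apply (LinearEquiv.ofBijective _ h) _

theorem smulEnd_lagrangeBasis (hF : ∀ g : G, ∀ φ ∈ F, g • φ ∈ F)
    (h : Function.Bijective (F.evalOn (P : Set X))) (g : G) (p : P) :
    F.smulEnd hF g (lagrangeBasis h p) = lagrangeBasis h (g • p) := by
  classical
  apply h.injective
  ext q
  change F.evalOn (P : Set X) (lagrangeBasis h p) (g⁻¹ • q) = _
  rw [evalOn_lagrangeBasis, evalOn_lagrangeBasis, Pi.single_apply, Pi.single_apply]
  simp only [inv_smul_eq_iff]

end Interpolation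

theorem Unisolvent.bijective_evalOn {n N : ℕ} {F : Submodule ℝ ((Fin n → ℝ) → ℝ)}
    {a : Fin N → (Fin n → ℝ)} (huni : Unisolvent F a) (ha : Function.Injective a) :
    Function.Bijective (F.evalOn (Set.range a)) := by
  have hbij : Function.Bijective fun (φ : F) (i : Fin N) => (φ : (Fin n → ℝ) → ℝ) (a i) :=
    Function.bijective_iff_existsUnique _ |>.mpr fun b => by
      simpa only [funext_iff] using huni b
  exact (Equiv.comp_bijective _ ((Equiv.ofInjective a ha).symm.arrowCongr (Equiv.refl ℝ))).mp hbij

theorem porbitUnder_eq_orbit {n : ℕ} (H : Subgroup (Equiv.Perm (Fin n))) (x : Fin n → ℝ) :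
    porbitUnder H x = orbit H x := by
  ext y
  exact ⟨fun ⟨σ, hσ, h⟩ => ⟨⟨σ, hσ⟩, h⟩, fun ⟨⟨σ, hσ⟩, h⟩ => ⟨σ, hσ, h⟩⟩

theorem forbitUnder_eq_orbit {n : ℕ} (H : Subgroup (Equiv.Perm (Fin n)))
    (g : (Fin n → ℝ) → ℝ) : forbitUnder H g = orbit H g := by
  ext y
  exact ⟨fun ⟨σ, hσ, h⟩ => ⟨⟨σ, hσ⟩, h⟩, fun ⟨⟨σ, hσ⟩, h⟩ => ⟨σ, hσ, h⟩⟩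

/-- in the symmetric unisolvent setup, for every subgroup `H ≤ S_n` the number of
`H`-orbits of the basis set `B` equals the number of `H`-orbits of the nodes set `P`. -/
theorem stmt_5 {n N : ℕ} (f : Fin N → ((Fin n → ℝ) → ℝ)) (hf : LinearIndependent ℝ f)
    (hBsym : ∀ σ, ∀ g ∈ Set.range f, fsmul σ g ∈ Set.range f)
    (a : Fin N → (Fin n → ℝ)) (ha : Function.Injective a)
    (hPsym : ∀ σ, ∀ p ∈ Set.range a, psmul σ p ∈ Set.range a)
    (huni : Unisolvent (Submodule.span ℝ (Set.range f)) a) :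
    ∀ H : Subgroup (Equiv.Perm (Fin n)),
      {O : Set ((Fin n → ℝ) → ℝ) | ∃ g ∈ Set.range f, O = forbitUnder H g}.ncard =
      {O : Set (Fin n → ℝ) | ∃ p ∈ Set.range a, O = porbitUnder H p}.ncard := by
  intro H
  let B : SubMulAction H ((Fin n → ℝ) → ℝ) := ⟨Set.range f, fun σ _ hg => hBsym σ _ hg⟩
  let P : SubMulAction H (Fin n → ℝ) := ⟨Set.range a, fun σ _ hp => hPsym σ _ hp⟩
  have : Finite B := Set.finite_range f
  have : Finite P := Set.finite_range a
  set F := Submodule.span ℝ (Set.range f)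
  have hF (σ : H) : ∀ φ ∈ F, σ • φ ∈ F := fun _ => smul_mem_span_of_smul_mem B.smul_mem' σ
  let b : Basis B ℝ F :=
    (Basis.span hf.linearIndepOn_id).map (LinearEquiv.ofEq _ _ (congrArg _ Subtype.range_coe))
  have hb (σ : H) (g : B) : Submodule.smulEnd hF σ (b g) = b (σ • g) := by
    ext1
    simp only [b, Basis.map_apply, LinearEquiv.coe_ofEq_apply]
    erw [Basis.span_apply, Basis.span_apply]
    rfl
  have hL := huni.bijective_evalOn ha
  simp only [forbitUnder_eq_orbit, porbitUnder_eq_orbit]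
  exact B.ncard_orbits.trans <| (card_orbits_eq_of_permuted_bases (Submodule.smulEnd hF) b
    (lagrangeBasis (P := P) hL) hb (smulEnd_lagrangeBasis hF hL)).trans P.ncard_orbits.symm
end

section
/- Let B = {f_1,…,f_N} be a linearly independent set of functions ℝ^n → ℝ that is symmetric under the action (σ • f)(x) = f(σ⁻¹ • x), and let F = span(B). Let P = {a_1,…,a_N} and P̃ = {ã_1,…,ã_N} be two symmetric N-element subsets of ℝ^n such that the Lagrange interpolation problem with space F is unisolvent both with nodes P and with nodes P̃. Then P and P̃ are equivalent as S_n-sets: there exists a bijection ψ : P → P̃ with ψ(σ • a) = σ • ψ(a) for all σ ∈ S_n and a ∈ P. -/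
/-- Two subsets of `ℝ^n` are equivalent as `S_n`-sets: there is an `S_n`-equivariant
bijection between them. -/
def SEquiv {n : ℕ} (X Y : Set (Fin n → ℝ)) : Prop :=
  ∃ ψ : X ≃ Y, ∀ (σ : Equiv.Perm (Fin n)) (z w : X),
    psmul σ (z : Fin n → ℝ) = (w : Fin n → ℝ) →
      psmul σ ((ψ z : Fin n → ℝ)) = ((ψ w : Fin n → ℝ))

/-!
Unisolvence makes evaluation at the nodes an isomorphism `F ≃ ℝ^N` that carries the action of a
permutation `σ` on `F` to the permutation of the nodes induced by `σ`. Taking traces, `σ` fixes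
as many points of `P` as of `P̃`.

The stabilizer of a point `z ∈ ℝ^n` is the Young subgroup of the level sets of `z`, and a vector
is fixed by that whole subgroup as soon as it is fixed by a single permutation cycling each level
set. Hence `P` and `P̃` have as many points fixed by each stabilizer, and by downward induction
over subgroups as many points with each given stabilizer. Two finite `S_n`-sets with this
property are isomorphic: match an orbit of one with an orbit of the other having the same
stabilizer, remove both and recurse.
-/

open Finset MulAction
open scoped Classical

attribute [local instance] arrowAction

theorem card_filter_lt_eq_sum {α P : Type*} [Preorder P] (s : α → P) {W U : Finset α}
    (hW : W ⊆ U) (p : P) :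
    #{x ∈ W | p < s x} = ∑ q ∈ {q ∈ U.image s | p < q}, #{x ∈ W | s x = q} := by
  rw [card_eq_sum_card_fiberwise (f := s) (t := {q ∈ U.image s | p < q})]
  · refine sum_congr rfl fun q hq => ?_
    rw [filter_filter]
    exact congrArg card <| filter_congr fun x _ =>
      and_iff_right_of_imp fun h => h ▸ (mem_filter.1 hq).2
  · intro x hx
    simp only [coe_filter, Set.mem_ofPred_eq, mem_image] at hx ⊢
    exact ⟨⟨x, hW hx.1, rfl⟩, hx.2⟩

theorem card_filter_eq_of_card_filter_le_eq {α P : Type*} [PartialOrder P] [WellFoundedGT P]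
    (s : α → P) {X Y : Finset α} (h : ∀ z, #{x ∈ X | s z ≤ s x} = #{y ∈ Y | s z ≤ s y})
    (p : P) : #{x ∈ X | s x = p} = #{y ∈ Y | s y = p} := by
  induction p using WellFoundedGT.induction with | _ p ih =>
  by_cases hp : ∃ z ∈ X ∪ Y, s z = p
  · obtain ⟨z, -, rfl⟩ := hp
    have split (W : Finset α) :
        #{x ∈ W | s z ≤ s x} = #{x ∈ W | s x = s z} + #{x ∈ W | s z < s x} := by
      rw [← card_filter_add_card_filter_not (fun x => s x = s z), filter_filter, filter_filter]
      congr 2 <;> ext x <;> simp +contextual [lt_iff_le_and_ne, eq_comm]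
    have := h z
    rw [split, split, card_filter_lt_eq_sum s (subset_union_left (s₂ := Y)),
      card_filter_lt_eq_sum s (subset_union_right (s₁ := X)),
      sum_congr rfl fun q (hq : q ∈ {q ∈ (X ∪ Y).image s | s z < q}) =>
        ih q (mem_filter.1 hq).2] at this
    omega
  · push Not at hp
    rw [filter_false_of_mem fun x hx => hp x (mem_union_left _ hx),
      filter_false_of_mem fun y hy => hp y (mem_union_right _ hy)]

theorem Set.BijOn.piecewise_of_inter_of_diff {α β : Type*} {f g : α → β} {X S : Set α}
    {Y T : Set β} (h₁ : Set.BijOn f (X ∩ S) (Y ∩ T)) (h₂ : Set.BijOn g (X \ S) (Y \ T)) :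
    Set.BijOn (S.piecewise f g) X Y := by
  have e₁ := h₁.congr fun z hz => (S.piecewise_eq_of_mem f g hz.2).symm
  have e₂ := h₂.congr fun z hz => (S.piecewise_eq_of_notMem f g hz.2).symm
  have hinj := (Set.injOn_union Set.disjoint_sdiff_inter.symm).2
    ⟨e₁.injOn, e₂.injOn, fun a ha b hb hab => (e₂.mapsTo hb).2 (hab ▸ (e₁.mapsTo ha).2)⟩
  simpa only [Set.inter_union_sdiff] using e₁.union e₂ hinj

namespace MulAction

variable {G α : Type*} [Group G] [MulAction G α]

theorem smul_mem_orbit_iff {g : G} {x z : α} : g • z ∈ orbit G x ↔ z ∈ orbit G x := by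
  rw [← orbit_eq_iff, orbit_smul, orbit_eq_iff]

theorem orbit_subset_of_smul_mem {X : Set α} (hX : ∀ g : G, ∀ x ∈ X, g • x ∈ X) {x : α}
    (hx : x ∈ X) : orbit G x ⊆ X := by
  rintro _ ⟨g, rfl⟩
  exact hX g x hx

theorem stabilizer_apply_eq_of_injOn {X : Set α} {ψ : α → α} (hX : ∀ g : G, ∀ x ∈ X, g • x ∈ X)
    (hinj : Set.InjOn ψ X) (hψ : ∀ g : G, ∀ x ∈ X, ψ (g • x) = g • ψ x) {x : α} (hx : x ∈ X) :
    stabilizer G (ψ x) = stabilizer G x := by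
  ext g
  rw [mem_stabilizer_iff, mem_stabilizer_iff, ← hψ g x hx, hinj.eq_iff (hX g x hx) hx]

/-- The witness is `g • x ↦ g • y`. -/
theorem exists_bijOn_orbit {x y : α} (hxy : stabilizer G x = stabilizer G y) :
    ∃ φ : α → α, Set.BijOn φ (orbit G x) (orbit G y) ∧
      ∀ g : G, ∀ z ∈ orbit G x, φ (g • z) = g • φ z := by
  have factors {x y : α} (hxy : stabilizer G x = stabilizer G y) :
      Function.FactorsThrough (· • y) (· • x : G → α) := fun g h (hgh : g • x = h • x) => by
    have : g⁻¹ * h ∈ stabilizer G x := by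
      rw [mem_stabilizer_iff, mul_smul, inv_smul_eq_iff, hgh]
    rw [hxy, mem_stabilizer_iff, mul_smul, inv_smul_eq_iff] at this
    exact this.symm
  have hφ (g : G) : Function.extend (· • x) (· • y) id (g • x) = g • y :=
    (factors hxy).extend_apply (f := (· • x : G → α)) id g
  refine ⟨Function.extend (· • x : G → α) (· • y) id, ⟨?_, ?_, ?_⟩, ?_⟩
  · rintro _ ⟨g, rfl⟩
    exact ⟨g, (hφ g).symm⟩
  · rintro _ ⟨g, rfl⟩ _ ⟨h, rfl⟩ hgh
    simp only [hφ] at hgh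
    exact factors hxy.symm hgh
  · rintro _ ⟨g, rfl⟩
    exact ⟨g • x, ⟨g, rfl⟩, hφ g⟩
  · rintro g _ ⟨h, rfl⟩
    simp only [smul_smul, hφ]

theorem card_filter_stabilizer_eq_of_bijOn {X Y : Finset α} {ψ : α → α}
    (hX : ∀ g : G, ∀ x ∈ X, g • x ∈ X) (hψ : Set.BijOn ψ X Y)
    (hψsmul : ∀ g : G, ∀ x ∈ X, ψ (g • x) = g • ψ x) (H : Subgroup G) :
    #{x ∈ X | stabilizer G x = H} = #{y ∈ Y | stabilizer G y = H} := by
  have hstab {x} (hx : x ∈ X) := stabilizer_apply_eq_of_injOn hX hψ.injOn hψsmul hx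
  refine card_nbij ψ (fun x hx => ?_) (hψ.injOn.mono fun x hx => ?_) (fun y hy => ?_)
  · simp only [coe_filter, Set.mem_ofPred_eq] at hx ⊢
    exact ⟨hψ.mapsTo hx.1, (hstab hx.1).trans hx.2⟩
  · exact (mem_filter.1 hx).1
  · simp only [coe_filter, Set.mem_ofPred_eq] at hy
    obtain ⟨x, hx, rfl⟩ := hψ.surjOn hy.1
    exact ⟨x, mem_filter.2 ⟨hx, (hstab hx).symm.trans hy.2⟩, rfl⟩

theorem card_filter_stabilizer_eq_add (X : Finset α) (S : Set α) (H : Subgroup G) :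
    #{x ∈ X | stabilizer G x = H} =
      #{x ∈ {z ∈ X | z ∈ S} | stabilizer G x = H} +
        #{x ∈ {z ∈ X | z ∉ S} | stabilizer G x = H} := by
  rw [filter_comm, filter_comm (· ∉ S), card_filter_add_card_filter_not]

theorem smul_mem_filter_mem_orbit {W : Finset α} (hW : ∀ g : G, ∀ w ∈ W, g • w ∈ W) (z : α)
    (g : G) (w : α) (hw : w ∈ {v ∈ W | v ∈ orbit G z}) : g • w ∈ {v ∈ W | v ∈ orbit G z} :=
  mem_filter.2 ⟨hW g w (mem_filter.1 hw).1, smul_mem_orbit_iff.2 (mem_filter.1 hw).2⟩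

theorem smul_mem_filter_notMem_orbit {W : Finset α} (hW : ∀ g : G, ∀ w ∈ W, g • w ∈ W) (z : α)
    (g : G) (w : α) (hw : w ∈ {v ∈ W | v ∉ orbit G z}) : g • w ∈ {v ∈ W | v ∉ orbit G z} :=
  mem_filter.2 ⟨hW g w (mem_filter.1 hw).1, mt smul_mem_orbit_iff.1 (mem_filter.1 hw).2⟩

theorem exists_mem_stabilizer_eq {X Y : Finset α}
    (hcard : ∀ H : Subgroup G, #{x ∈ X | stabilizer G x = H} = #{y ∈ Y | stabilizer G y = H})
    {x : α} (hx : x ∈ X) : ∃ y ∈ Y, stabilizer G y = stabilizer G x := by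
  have : 0 < #{z ∈ X | stabilizer G z = stabilizer G x} := card_pos.2 ⟨x, mem_filter.2 ⟨hx, rfl⟩⟩
  obtain ⟨y, hy⟩ := card_pos.1 (hcard _ ▸ this)
  exact ⟨y, mem_filter.1 hy⟩

theorem exists_bijOn_smul_of_card_filter_stabilizer_eq {X Y : Finset α}
    (hX : ∀ g : G, ∀ x ∈ X, g • x ∈ X) (hY : ∀ g : G, ∀ y ∈ Y, g • y ∈ Y)
    (hcard : ∀ H : Subgroup G, #{x ∈ X | stabilizer G x = H} = #{y ∈ Y | stabilizer G y = H}) :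
    ∃ ψ : α → α, Set.BijOn ψ X Y ∧ ∀ g : G, ∀ x ∈ X, ψ (g • x) = g • ψ x := by
  induction X using Finset.strongInduction generalizing Y with | H X ih =>
  rcases X.eq_empty_or_nonempty with rfl | ⟨x, hx⟩
  · obtain rfl : Y = ∅ := eq_empty_of_forall_notMem fun y hy => by
      simpa using exists_mem_stabilizer_eq (fun H => (hcard H).symm) hy
    exact ⟨id, Set.bijOn_id _, fun _ _ h => absurd h (notMem_empty _)⟩
  obtain ⟨y, hy, hxy⟩ := exists_mem_stabilizer_eq hcard hx
  obtain ⟨φ, hφ, hφsmul⟩ := exists_bijOn_orbit hxy.symm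
  have hφ' : Set.BijOn φ (↑X ∩ orbit G x) (↑Y ∩ orbit G y) := by
    rwa [Set.inter_eq_right.2 (orbit_subset_of_smul_mem hX hx),
      Set.inter_eq_right.2 (orbit_subset_of_smul_mem hY hy)]
  obtain ⟨ψ, hψ, hψsmul⟩ := ih {z ∈ X | z ∉ orbit G x}
    (filter_ssubset.2 ⟨x, hx, not_not.2 (mem_orbit_self x)⟩)
    (smul_mem_filter_notMem_orbit hX x) (smul_mem_filter_notMem_orbit hY y)
    fun H => by
      have h := hcard H
      rw [card_filter_stabilizer_eq_add X (orbit G x), card_filter_stabilizer_eq_add Y (orbit G y),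
        card_filter_stabilizer_eq_of_bijOn (Y := {z ∈ Y | z ∈ orbit G y})
          (smul_mem_filter_mem_orbit hX x)
          (by rw [coe_filter, coe_filter]; exact hφ')
          (fun g z hz => hφsmul g z (mem_filter.1 hz).2)] at h
      omega
  rw [coe_filter, coe_filter] at hψ
  refine ⟨(orbit G x).piecewise φ ψ, hφ'.piecewise_of_inter_of_diff hψ, fun g z hz => ?_⟩
  by_cases hzx : z ∈ orbit G x
  · simp only [Set.piecewise_eq_of_mem _ _ _ hzx, Set.piecewise_eq_of_mem _ _ _
      (smul_mem_orbit_iff.2 hzx), hφsmul g z hzx]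
  · simp only [Set.piecewise_eq_of_notMem _ _ _ hzx, Set.piecewise_eq_of_notMem _ _ _
      (mt smul_mem_orbit_iff.1 hzx), hψsmul g z (mem_filter.2 ⟨hz, hzx⟩)]

end MulAction

theorem List.apply_eq_of_forall_formPerm {ι γ : Type*} [DecidableEq ι] {l : List ι}
    (hl : l.Nodup) {y : ι → γ} (hy : ∀ i, y (l.formPerm i) = y i) {i j : ι} (hi : i ∈ l)
    (hj : j ∈ l) : y i = y j := by
  have key : ∀ k (hk : k < l.length), y l[k] = y l[0] := by
    intro k
    induction k with
    | zero => exact fun _ => rfl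
    | succ k ih =>
      intro hk
      calc y l[k + 1] = y (l.formPerm l[k]) := by
            simp only [List.formPerm_apply_getElem _ hl, Nat.mod_eq_of_lt hk]
        _ = y l[0] := (hy _).trans (ih (by omega))
  obtain ⟨a, ha, rfl⟩ := List.mem_iff_getElem.1 hi
  obtain ⟨b, hb, rfl⟩ := List.mem_iff_getElem.1 hj
  rw [key a ha, key b hb]

/-- `σ` cycles each fibre of `z`, listed in some order. -/
theorem exists_perm_forall_apply_eq_iff {ι β : Type*} [Fintype ι] (z : ι → β) :
    ∃ σ : Equiv.Perm ι, ∀ y : ι → β,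
      (∀ i, y (σ i) = y i) ↔ ∀ i j, z i = z j → y i = y j := by
  let L (v : β) : List ι := ({j | z j = v} : Finset ι).toList
  have mem_L {i : ι} {v : β} : i ∈ L v ↔ z i = v := by simp [L]
  let g (i : ι) : ι := (L (z i)).formPerm i
  have hzg (i : ι) : z (g i) = z i := mem_L.1 (List.formPerm_apply_mem_of_mem (mem_L.2 rfl))
  have hg : Function.Injective g := fun i j hij => by
    have hz : z i = z j := by rw [← hzg i, ← hzg j, hij]
    exact (L (z j)).formPerm.injective (by simpa only [g, hz] using hij)
  refine ⟨Equiv.ofBijective g (Finite.injective_iff_bijective.1 hg),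
    fun y => ⟨fun hy i j hij => ?_, fun hy i => hy _ _ (hzg i)⟩⟩
  refine List.apply_eq_of_forall_formPerm (l := L (z i)) (Finset.nodup_toList _) (fun k => ?_)
    (mem_L.2 rfl) (mem_L.2 hij.symm)
  by_cases hk : k ∈ L (z i)
  · have : (L (z i)).formPerm k = g k := by simp only [g, mem_L.1 hk]
    rw [this]
    exact hy k
  · rw [List.formPerm_apply_of_notMem hk]

namespace Equiv.Perm

variable {ι γ : Type*}

theorem arrowAction_smul_apply (σ : Equiv.Perm ι) (y : ι → γ) (i : ι) :
    (σ • y) i = y (σ⁻¹ i) := rfl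

theorem smul_eq_self_iff {σ : Equiv.Perm ι} {y : ι → γ} : σ • y = y ↔ ∀ i, y (σ i) = y i := by
  simp only [funext_iff, arrowAction_smul_apply]
  refine ⟨fun h i => ?_, fun h i => ?_⟩
  · simpa using (h (σ i)).symm
  · simpa using (h (σ⁻¹ i)).symm

theorem exists_stabilizer_le_iff [Finite ι] (z : ι → γ) :
    ∃ σ : Equiv.Perm ι, ∀ y : ι → γ,
      stabilizer (Equiv.Perm ι) z ≤ stabilizer (Equiv.Perm ι) y ↔ σ • y = y := by
  have := Fintype.ofFinite ι
  obtain ⟨σ, hσ⟩ := exists_perm_forall_apply_eq_iff z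
  refine ⟨σ, fun y => ⟨fun h => h (smul_eq_self_iff.2 ((hσ z).2 fun _ _ => id)),
    fun h τ hτ => smul_eq_self_iff.2 fun i => ?_⟩⟩
  exact (hσ y).1 (smul_eq_self_iff.1 h) _ _ (smul_eq_self_iff.1 hτ i)

end Equiv.Perm

theorem LinearMap.trace_funLeft_perm {R ι : Type*} [CommRing R] [Fintype ι] [DecidableEq ι]
    (τ : Equiv.Perm ι) : trace R (ι → R) (funLeft R R τ) = #{i | τ i = i} := by
  have : funLeft R R τ = Matrix.toLin' (τ.permMatrix R) := by
    refine LinearMap.ext fun v => ?_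
    rw [Matrix.toLin'_apply, Matrix.permMatrix_mulVec]
    rfl
  rw [this, Matrix.trace_toLin'_eq, Matrix.trace_permutation, ← Set.ncard_coe_finset]
  simp [Function.fixedPoints, Function.IsFixedPt]

theorem exists_perm_apply_eq_of_injective {ι α : Type*} [Finite ι] {a : ι → α}
    (ha : Function.Injective a) {e : α → α} (he : Function.Injective e)
    (hmem : ∀ i, e (a i) ∈ Set.range a) : ∃ τ : Equiv.Perm ι, ∀ i, a (τ i) = e (a i) := by
  choose t ht using hmem
  have ht_inj : Function.Injective t := fun i j hij => ha (he (by rw [← ht, ← ht, hij]))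
  exact ⟨Equiv.ofBijective t (Finite.injective_iff_bijective.1 ht_inj), ht⟩

theorem trace_restrict_funLeft_eq_card {α ι : Type*} [Fintype ι] {F : Submodule ℝ (α → ℝ)}
    {a : ι → α} (ha : Function.Injective a)
    (hev : Function.Bijective (LinearMap.funLeft ℝ ℝ a ∘ₗ F.subtype)) {e : Equiv.Perm α}
    (he : ∀ i, e (a i) ∈ Set.range a) (hF : ∀ g ∈ F, LinearMap.funLeft ℝ ℝ e g ∈ F) :
    LinearMap.trace ℝ F ((LinearMap.funLeft ℝ ℝ e).restrict hF) = #{i | e (a i) = a i} := by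
  obtain ⟨τ, hτ⟩ := exists_perm_apply_eq_of_injective ha e.injective he
  let E := LinearEquiv.ofBijective _ hev
  have hconj :
      (LinearMap.funLeft ℝ ℝ e).restrict hF = E.symm.conj (LinearMap.funLeft ℝ ℝ τ) := by
    ext g : 1
    apply E.injective
    ext i
    simp [E, LinearEquiv.conj_apply, LinearMap.funLeft_apply, hτ]
  rw [hconj, LinearMap.trace_conj', LinearMap.trace_funLeft_perm]
  simp only [← hτ, ha.eq_iff]

theorem psmul_eq_smul {n : ℕ} (σ : Equiv.Perm (Fin n)) (x : Fin n → ℝ) : psmul σ x = σ • x :=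
  rfl

theorem Unisolvent.bijective {n N : ℕ} {F : Submodule ℝ ((Fin n → ℝ) → ℝ)}
    {a : Fin N → (Fin n → ℝ)} (hu : Unisolvent F a) :
    Function.Bijective (LinearMap.funLeft ℝ ℝ a ∘ₗ F.subtype) :=
  Function.bijective_iff_existsUnique _ |>.2 fun b => by
    simpa only [funext_iff, LinearMap.comp_apply, Submodule.subtype_apply,
      LinearMap.funLeft_apply] using hu b

theorem Unisolvent.card_filter_smul_eq_trace {n N : ℕ} {F : Submodule ℝ ((Fin n → ℝ) → ℝ)}
    {a : Fin N → (Fin n → ℝ)} (hu : Unisolvent F a) (ha : Function.Injective a)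
    (hsym : ∀ σ, ∀ p ∈ Set.range a, psmul σ p ∈ Set.range a) (σ : Equiv.Perm (Fin n))
    (hF : ∀ g ∈ F, LinearMap.funLeft ℝ ℝ (toPerm σ⁻¹) g ∈ F) :
    (#{x ∈ (Set.range a).toFinset | σ • x = x} : ℝ) =
      LinearMap.trace ℝ F ((LinearMap.funLeft ℝ ℝ (toPerm σ⁻¹)).restrict hF) := by
  rw [trace_restrict_funLeft_eq_card ha hu.bijective fun i => hsym σ⁻¹ _ ⟨i, rfl⟩,
    Set.toFinset_range, filter_image, card_image_of_injective _ ha]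
  simp only [toPerm_apply, eq_comm, eq_inv_smul_iff]

theorem SEquiv.of_bijOn {n : ℕ} {X Y : Set (Fin n → ℝ)} {ψ : (Fin n → ℝ) → (Fin n → ℝ)}
    (hψ : Set.BijOn ψ X Y) (hψsmul : ∀ σ : Equiv.Perm (Fin n), ∀ x ∈ X, ψ (σ • x) = σ • ψ x) :
    SEquiv X Y :=
  ⟨hψ.equiv ψ, fun σ z w hzw => by
    show σ • ψ z = ψ w
    rw [← hψsmul σ z z.2, ← psmul_eq_smul, hzw]⟩

theorem stmt_16_general {n N : ℕ} (f : Fin N → ((Fin n → ℝ) → ℝ))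
    (hBsym : ∀ σ, ∀ g ∈ Set.range f, fsmul σ g ∈ Set.range f)
    (a a' : Fin N → (Fin n → ℝ)) (ha : Function.Injective a) (ha' : Function.Injective a')
    (hPsym : ∀ σ, ∀ p ∈ Set.range a, psmul σ p ∈ Set.range a)
    (hP'sym : ∀ σ, ∀ p ∈ Set.range a', psmul σ p ∈ Set.range a')
    (hu : Unisolvent (Submodule.span ℝ (Set.range f)) a)
    (hu' : Unisolvent (Submodule.span ℝ (Set.range f)) a') :
    SEquiv (Set.range a) (Set.range a') := by
  have hF (σ : Equiv.Perm (Fin n)) := Submodule.mapsTo_span (R := ℝ)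
    (f := LinearMap.funLeft ℝ ℝ (toPerm σ⁻¹)) (hBsym σ)
  have hfix (σ : Equiv.Perm (Fin n)) : #{x ∈ (Set.range a).toFinset | σ • x = x} =
      #{x ∈ (Set.range a').toFinset | σ • x = x} := by
    exact_mod_cast (hu.card_filter_smul_eq_trace ha hPsym σ (hF σ)).trans
      (hu'.card_filter_smul_eq_trace ha' hP'sym σ (hF σ)).symm
  have hstab := card_filter_eq_of_card_filter_le_eq (stabilizer (Equiv.Perm (Fin n)))
      (X := (Set.range a).toFinset) (Y := (Set.range a').toFinset) fun z => by
    obtain ⟨σ, hσ⟩ := Equiv.Perm.exists_stabilizer_le_iff z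
    simpa only [hσ] using hfix σ
  obtain ⟨ψ, hψ, hψsmul⟩ := exists_bijOn_smul_of_card_filter_stabilizer_eq
    (by simpa [psmul_eq_smul] using hPsym) (by simpa [psmul_eq_smul] using hP'sym) hstab
  rw [Set.coe_toFinset, Set.coe_toFinset] at hψ
  exact SEquiv.of_bijOn hψ fun σ x hx => hψsmul σ x (Set.mem_toFinset.2 hx)

/-- with `B = {f_1,…,f_N}` a linearly independent symmetric set of functions,
`F = span B`, and two symmetric `N`-element node sets `P = {a_i}` and `P̃ = {a'_i}` that are
both unisolvent for `F`, the node sets `P` and `P̃` are equivalent as `S_n`-sets. -/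
theorem stmt_16 {n N : ℕ} (f : Fin N → ((Fin n → ℝ) → ℝ)) (hf : LinearIndependent ℝ f)
    (hBsym : ∀ σ, ∀ g ∈ Set.range f, fsmul σ g ∈ Set.range f)
    (a a' : Fin N → (Fin n → ℝ)) (ha : Function.Injective a) (ha' : Function.Injective a')
    (hPsym : ∀ σ, ∀ p ∈ Set.range a, psmul σ p ∈ Set.range a)
    (hP'sym : ∀ σ, ∀ p ∈ Set.range a', psmul σ p ∈ Set.range a')
    (hu : Unisolvent (Submodule.span ℝ (Set.range f)) a)
    (hu' : Unisolvent (Submodule.span ℝ (Set.range f)) a') :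
    SEquiv (Set.range a) (Set.range a') :=
  stmt_16_general f hBsym a a' ha ha' hPsym hP'sym hu hu'
end
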